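/- arXiv:2203.15724 — 3 statements merged into one kernel-verified Lean document; each statement's English description precedes it below -/
import Mathlib

section
/- Let 𝔽₂ be the field with two elements, let 𝒳, 𝒯 and 𝒴 be finite index sets, let L : 𝒳 × 𝒯 → 𝔽₂ and L̄ : 𝒯 × 𝒴 → 𝔽₂ be matrices, and let J = L·L̄ be their product, i.e. J(X,Y) = Σ_{ρ∈𝒯} L(X,ρ)·L̄(ρ,Y) in 𝔽₂. Let W be a linearly ordered cancellative additive commutative monoid and w : 𝒳 → W a weight function. Suppose ℬ ⊆ 𝒳 is such that the family of rows (L(B,·))_{B∈ℬ} is linearly independent over 𝔽₂ and spans the 𝔽₂-linear span of all rows of L, and such that Σ_{B∈ℬ} w(B) is minimal among all subsets of 𝒳 whose corresponding rows form a basis of the row space of L. Then for every X ∈ 𝒳 and every Y ∈ 𝒴 with J(X,Y) = 1, there exists B ∈ ℬ with J(B,Y) = 1 and w(B) ≤ w(X). -/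
/-!
If `J X Y = 1`, the linear functional `v ↦ (v ᵥ* Lbar) Y` is nonzero on the row `L X`. Expanding
`L X` in the basis rows, some basis row `L b` has a nonzero coefficient and a nonzero value of
that functional. If `w X < w b`, the Steinitz exchange of `b` for `X` would produce a basis of the
row space of smaller weight.
-/

open Submodule Finsupp

section BasisExchange

variable {ι K V : Type*} [DivisionRing K] [AddCommGroup V] [Module K V] {v : ι → V}

theorem LinearIndepOn.linearCombination_notMem_span_image_diff {s : Set ι}
    (hs : LinearIndepOn K v s) {l : ι →₀ K} (hl : l ∈ supported K K s) {b : ι}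
    (hb : l b ≠ 0) :
    linearCombination K v l ∉ span K (v '' (s \ {b})) := by
  intro h
  obtain ⟨l', hl', hll'⟩ := (mem_span_image_iff_linearCombination K).1 h
  have hl's : l' ∈ supported K K s := supported_mono Set.sdiff_subset hl'
  have hb' : l' b = 0 := notMem_support_iff.1 fun hmem => (hl' hmem).2 rfl
  exact hb (linearIndepOn_iffₛ.1 hs l hl l' hl's hll'.symm ▸ hb')

theorem LinearIndepOn.exchange {s : Set ι} (hs : LinearIndepOn K v s) {l : ι →₀ K}
    (hl : l ∈ supported K K s) {b : ι} (hb : l b ≠ 0) {x : ι}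
    (hx : linearCombination K v l = v x) :
    LinearIndepOn K v (insert x (s \ {b})) ∧
      span K (v '' insert x (s \ {b})) = span K (v '' s) := by
  have hbs : b ∈ s := hl (mem_support_iff.2 hb)
  have hx_notMem : v x ∉ span K (v '' (s \ {b})) :=
    hx ▸ hs.linearCombination_notMem_span_image_diff hl hb
  have hx_mem : v x ∈ span K (insert (v b) (v '' (s \ {b}))) := by
    rw [← Set.image_insert_eq, Set.insert_sdiff_singleton, Set.insert_eq_of_mem hbs, ← hx]
    exact (mem_span_image_iff_linearCombination K).2 ⟨l, hl, rfl⟩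
  have hb_mem : v b ∈ span K (insert (v x) (v '' (s \ {b}))) :=
    mem_span_insert_exchange hx_mem hx_notMem
  refine ⟨(hs.mono Set.sdiff_subset).insert hx_notMem, ?_⟩
  conv_rhs => rw [← Set.insert_eq_of_mem hbs, ← Set.insert_sdiff_singleton, Set.image_insert_eq]
  rw [Set.image_insert_eq]
  exact le_antisymm
    (span_le.2 (Set.insert_subset hx_mem ((Set.subset_insert _ _).trans subset_span)))
    (span_le.2 (Set.insert_subset hb_mem ((Set.subset_insert _ _).trans subset_span)))

theorem LinearIndepOn.exists_mem_apply_ne_zero_weight_le_of_minimal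
    {W : Type*} [AddCommMonoid W] [LinearOrder W] [IsOrderedCancelAddMonoid W] (w : ι → W)
    {s : Finset ι} (hs : LinearIndepOn K v (s : Set ι))
    (hmin : ∀ t : Finset ι, LinearIndepOn K v (t : Set ι) →
      span K (v '' t) = span K (v '' s) → ∑ i ∈ s, w i ≤ ∑ i ∈ t, w i)
    (φ : V →ₗ[K] K) {x : ι} (hx : v x ∈ span K (v '' s)) (hφx : φ (v x) ≠ 0) :
    ∃ b ∈ s, φ (v b) ≠ 0 ∧ w b ≤ w x := by
  classical
  by_cases hxs : x ∈ s
  · exact ⟨x, hxs, hφx, le_rfl⟩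
  obtain ⟨l, hl, hlx⟩ := (mem_span_image_iff_linearCombination K).1 hx
  rw [← hlx, apply_linearCombination, linearCombination_apply] at hφx
  obtain ⟨b, -, hb⟩ := Finset.exists_ne_zero_of_sum_ne_zero hφx
  have hlb : l b ≠ 0 := left_ne_zero_of_smul hb
  have hbs : b ∈ s := hl (mem_support_iff.2 hlb)
  refine ⟨b, hbs, right_ne_zero_of_smul hb, not_lt.1 fun hlt => ?_⟩
  obtain ⟨hindep, hspan⟩ := hs.exchange hl hlb hlx
  have hle := hmin (insert x (s.erase b)) (by simpa using hindep) (by simpa using hspan)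
  have hlt' : ∑ i ∈ insert x (s.erase b), w i < ∑ i ∈ s, w i := by
    rw [Finset.sum_insert fun h => hxs (Finset.mem_of_mem_erase h),
      ← Finset.add_sum_erase s w hbs]
    exact add_lt_add_left hlt _
  exact hle.not_gt hlt'

end BasisExchange

theorem stmt_0_general {𝒳 𝒯 𝒴 : Type*} [Fintype 𝒯]
    {W : Type*} [AddCommMonoid W] [LinearOrder W] [IsOrderedCancelAddMonoid W]
    (L : Matrix 𝒳 𝒯 (ZMod 2)) (Lbar : Matrix 𝒯 𝒴 (ZMod 2))
    (J : Matrix 𝒳 𝒴 (ZMod 2)) (hJ : J = L * Lbar)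
    (w : 𝒳 → W) (B : Finset 𝒳)
    (hindep : LinearIndependent (ZMod 2) (fun b : B => L (b : 𝒳)))
    (hspan : Submodule.span (ZMod 2) (Set.range (fun b : B => L (b : 𝒳))) =
      Submodule.span (ZMod 2) (Set.range L))
    (hmin : ∀ B' : Finset 𝒳,
      LinearIndependent (ZMod 2) (fun b : B' => L (b : 𝒳)) →
      Submodule.span (ZMod 2) (Set.range (fun b : B' => L (b : 𝒳))) =
        Submodule.span (ZMod 2) (Set.range L) →
      ∑ b ∈ B, w b ≤ ∑ b ∈ B', w b) :
    ∀ (X : 𝒳) (Y : 𝒴), J X Y = 1 → ∃ b ∈ B, J b Y = 1 ∧ w b ≤ w X := by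
  intro X Y hXY
  set φ : (𝒯 → ZMod 2) →ₗ[ZMod 2] ZMod 2 := LinearMap.proj Y ∘ₗ Lbar.vecMulLinear
  have hJφ : ∀ x, J x Y = φ (L x) := fun x => hJ ▸ rfl
  have hspan' : span (ZMod 2) (L '' B) = span (ZMod 2) (Set.range L) :=
    (congrArg (span (ZMod 2)) (Set.image_eq_range L B)).trans hspan
  have hX : L X ∈ span (ZMod 2) (L '' B) := hspan' ▸ subset_span (Set.mem_range_self X)
  obtain ⟨b, hbB, hb, hwb⟩ :=
    LinearIndepOn.exists_mem_apply_ne_zero_weight_le_of_minimal w hindep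
      (fun t ht htB => hmin t ht ((congrArg (span (ZMod 2)) (Set.image_eq_range L t)).symm.trans
        (htB.trans hspan')))
      φ hX (by rw [← hJφ, hXY]; exact one_ne_zero)
  exact ⟨b, hbB, Fin.eq_one_of_ne_zero _ (hJφ b ▸ hb), hwb⟩

/-- minimum-weight basis of the row space of a matrix over 𝔽₂. -/
theorem stmt_0 {𝒳 𝒯 𝒴 : Type*} [Fintype 𝒳] [Fintype 𝒯] [Fintype 𝒴] [DecidableEq 𝒳]
    {W : Type*} [AddCommMonoid W] [LinearOrder W] [IsOrderedCancelAddMonoid W]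
    (L : Matrix 𝒳 𝒯 (ZMod 2)) (Lbar : Matrix 𝒯 𝒴 (ZMod 2))
    (J : Matrix 𝒳 𝒴 (ZMod 2)) (hJ : J = L * Lbar)
    (w : 𝒳 → W) (B : Finset 𝒳)
    (hindep : LinearIndependent (ZMod 2) (fun b : B => L (b : 𝒳)))
    (hspan : Submodule.span (ZMod 2) (Set.range (fun b : B => L (b : 𝒳))) =
      Submodule.span (ZMod 2) (Set.range L))
    (hmin : ∀ B' : Finset 𝒳,
      LinearIndependent (ZMod 2) (fun b : B' => L (b : 𝒳)) →
      Submodule.span (ZMod 2) (Set.range (fun b : B' => L (b : 𝒳))) =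
        Submodule.span (ZMod 2) (Set.range L) →
      ∑ b ∈ B, w b ≤ ∑ b ∈ B', w b) :
    ∀ (X : 𝒳) (Y : 𝒴), J X Y = 1 → ∃ b ∈ B, J b Y = 1 ∧ w b ≤ w X :=
  stmt_0_general L Lbar J hJ w B hindep hspan hmin
end

section
/- Let G be a finite simple graph, let d and q be positive integers, let A ⊆ V(G), let M be an additive commutative monoid, and let w : V(G) × [q] × ℕ^q → M be a d-stable weight function. Let X = (X₁, …, X_q) be an ordered partition of A into q (possibly empty) parts, and let Y = (Y₁, …, Y_q) and Y' = (Y'₁, …, Y'_q) be two ordered partitions of V(G) ∖ A into q (possibly empty) parts that are d-neighbor-equivalent over A. Then Σ_{j∈[q]} Σ_{v∈X_j} w(v, j, (|N(v) ∩ (X₁ ∪ Y₁)|, …, |N(v) ∩ (X_q ∪ Y_q)|)) = Σ_{j∈[q]} Σ_{v∈X_j} w(v, j, (|N(v) ∩ (X₁ ∪ Y'₁)|, …, |N(v) ∩ (X_q ∪ Y'_q)|)). -/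
/-- a d-stable weight function gives equal total weight on colorings
whose restrictions outside A are d-neighbor-equivalent over A. -/
theorem stmt_5 {V : Type*} [Fintype V] [DecidableEq V]
    (G : SimpleGraph V) [DecidableRel G.Adj]
    (d q : ℕ) (hd : 0 < d) (hq : 0 < q)
    {M : Type*} [AddCommMonoid M]
    (w : V → Fin q → (Fin q → ℕ) → M)
    (hstable : ∀ (v : V) (a : Fin q) (k : Fin q → ℕ),
      w v a k = w v a (fun j => min d (k j)))
    (A : Finset V) (X Y Y' : Fin q → Finset V)
    (hXdisj : ∀ i j : Fin q, i ≠ j → Disjoint (X i) (X j))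
    (hXunion : Finset.univ.biUnion X = A)
    (hYdisj : ∀ i j : Fin q, i ≠ j → Disjoint (Y i) (Y j))
    (hYunion : Finset.univ.biUnion Y = Aᶜ)
    (hY'disj : ∀ i j : Fin q, i ≠ j → Disjoint (Y' i) (Y' j))
    (hY'union : Finset.univ.biUnion Y' = Aᶜ)
    (hequiv : ∀ u ∈ A, ∀ j : Fin q,
      min d (G.neighborFinset u ∩ Y j).card = min d (G.neighborFinset u ∩ Y' j).card) :
    ∑ j : Fin q, ∑ v ∈ X j,
        w v j (fun h => (G.neighborFinset v ∩ (X h ∪ Y h)).card) =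
      ∑ j : Fin q, ∑ v ∈ X j,
        w v j (fun h => (G.neighborFinset v ∩ (X h ∪ Y' h)).card) := by
  have hXA : ∀ h : Fin q, X h ⊆ A := by
    intro h x hx
    rw [← hXunion]
    exact Finset.mem_biUnion.2 ⟨h, Finset.mem_univ _, hx⟩
  have hYA : ∀ h : Fin q, Y h ⊆ Aᶜ := by
    intro h x hx
    rw [← hYunion]
    exact Finset.mem_biUnion.2 ⟨h, Finset.mem_univ _, hx⟩
  have hY'A : ∀ h : Fin q, Y' h ⊆ Aᶜ := by
    intro h x hx
    rw [← hY'union]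
    exact Finset.mem_biUnion.2 ⟨h, Finset.mem_univ _, hx⟩
  refine Finset.sum_congr rfl fun j _ => Finset.sum_congr rfl fun v hv => ?_
  have hvA : v ∈ A := hXA j hv
  rw [hstable v j (fun h => (G.neighborFinset v ∩ (X h ∪ Y h)).card),
      hstable v j (fun h => (G.neighborFinset v ∩ (X h ∪ Y' h)).card)]
  refine congrArg _ (funext fun h => ?_)
  show d ⊓ _ = d ⊓ _
  have hdisj : Disjoint (X h) (Y h) :=
    Finset.disjoint_left.2 fun x hx hx' => by
      have := hYA h hx'; simp [Finset.mem_compl] at this; exact this (hXA h hx)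
  have hdisj' : Disjoint (X h) (Y' h) :=
    Finset.disjoint_left.2 fun x hx hx' => by
      have := hY'A h hx'; simp [Finset.mem_compl] at this; exact this (hXA h hx)
  have e1 : (G.neighborFinset v ∩ (X h ∪ Y h)).card
      = (G.neighborFinset v ∩ X h).card + (G.neighborFinset v ∩ Y h).card := by
    rw [Finset.inter_union_distrib_left, Finset.card_union_of_disjoint
      (hdisj.mono Finset.inter_subset_right Finset.inter_subset_right)]
  have e2 : (G.neighborFinset v ∩ (X h ∪ Y' h)).card
      = (G.neighborFinset v ∩ X h).card + (G.neighborFinset v ∩ Y' h).card := by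
    rw [Finset.inter_union_distrib_left, Finset.card_union_of_disjoint
      (hdisj'.mono Finset.inter_subset_right Finset.inter_subset_right)]
  rw [e1, e2]
  have := hequiv v hvA h
  omega
end

section
/- Let k be a positive integer. For all a ∈ ℕ and all ℓ₀, ℓ₁, …, ℓ_{k+1} ∈ ℕ, the inequality a + Σ_{j=0}^{k+1} j·ℓ_j ≥ k + Σ_{j=1}^{k+1} ℓ_j holds if and only if the inequality a + Σ_{j=0}^{k+1} j·min(k, ℓ_j) ≥ k + Σ_{j=1}^{k+1} min(k, ℓ_j) holds. (That is, the check function of the locally checkable formulation of [k]-Roman domination is k-stable.) -/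
private lemma split_sum (k : ℕ) (f : Fin (k + 2) → ℕ) :
    ∑ j : Fin (k + 2), (j : ℕ) * f j =
      (∑ j ∈ Finset.univ.filter (fun j : Fin (k + 2) => 1 ≤ (j : ℕ)), f j) +
        ∑ j : Fin (k + 2), ((j : ℕ) - 1) * f j := by
  rw [Finset.sum_filter, ← Finset.sum_add_distrib]
  apply Finset.sum_congr rfl
  intro j _
  rcases Nat.eq_zero_or_pos (j : ℕ) with h | h
  · simp [h]
  · rw [if_pos (show 1 ≤ (j : ℕ) by omega)]
    obtain ⟨m, hm⟩ : ∃ m, (j : ℕ) = m + 1 := ⟨(j:ℕ)-1, by omega⟩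
    rw [hm]
    simp [Nat.add_mul]
    ring

private lemma key (k : ℕ) (_hk : 0 < k) (a : ℕ) (ℓ : Fin (k + 2) → ℕ) :
    a + ∑ j : Fin (k + 2), ((j : ℕ) - 1) * ℓ j ≥ k ↔
      a + ∑ j : Fin (k + 2), ((j : ℕ) - 1) * min k (ℓ j) ≥ k := by
  constructor
  · intro h
    by_cases hc : ∃ j : Fin (k + 2), 2 ≤ (j : ℕ) ∧ k < ℓ j
    · obtain ⟨j, hj2, hjk⟩ := hc
      have h1 : ((j : ℕ) - 1) * min k (ℓ j) ≥ k := by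
        have : min k (ℓ j) = k := min_eq_left hjk.le
        rw [this]
        calc k = 1 * k := (one_mul k).symm
          _ ≤ ((j : ℕ) - 1) * k := Nat.mul_le_mul_right k (by omega)
      have h2 : ((j : ℕ) - 1) * min k (ℓ j) ≤
          ∑ i : Fin (k + 2), ((i : ℕ) - 1) * min k (ℓ i) :=
        Finset.single_le_sum (f := fun i : Fin (k + 2) => ((i : ℕ) - 1) * min k (ℓ i))
          (fun i _ => Nat.zero_le _) (Finset.mem_univ j)
      omega
    · push_neg at hc
      have : ∑ j : Fin (k + 2), ((j : ℕ) - 1) * min k (ℓ j) =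
          ∑ j : Fin (k + 2), ((j : ℕ) - 1) * ℓ j := by
        apply Finset.sum_congr rfl
        intro j _
        rcases Nat.lt_or_ge (j : ℕ) 2 with hj | hj
        · have : (j : ℕ) - 1 = 0 := by omega
          simp [this]
        · have := hc j hj
          rw [min_eq_right this]
      omega
  · intro h
    have hmono : ∑ j : Fin (k + 2), ((j : ℕ) - 1) * min k (ℓ j) ≤
        ∑ j : Fin (k + 2), ((j : ℕ) - 1) * ℓ j :=
      Finset.sum_le_sum fun j _ => Nat.mul_le_mul_left _ (min_le_right _ _)
    omega

/-- the check function of [k]-Roman domination is k-stable. -/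
theorem stmt_8 (k : ℕ) (hk : 0 < k) (a : ℕ) (ℓ : Fin (k + 2) → ℕ) :
    (a + ∑ j : Fin (k + 2), (j : ℕ) * ℓ j ≥
        k + ∑ j ∈ Finset.univ.filter (fun j : Fin (k + 2) => 1 ≤ (j : ℕ)), ℓ j) ↔
      (a + ∑ j : Fin (k + 2), (j : ℕ) * min k (ℓ j) ≥
        k + ∑ j ∈ Finset.univ.filter (fun j : Fin (k + 2) => 1 ≤ (j : ℕ)), min k (ℓ j)) := by
  rw [split_sum k ℓ, split_sum k (fun j => min k (ℓ j))]
  have h1 : (a + ((∑ j ∈ Finset.univ.filter (fun j : Fin (k + 2) => 1 ≤ (j : ℕ)), ℓ j) +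
      ∑ j : Fin (k + 2), ((j : ℕ) - 1) * ℓ j) ≥
      k + ∑ j ∈ Finset.univ.filter (fun j : Fin (k + 2) => 1 ≤ (j : ℕ)), ℓ j) ↔
      a + ∑ j : Fin (k + 2), ((j : ℕ) - 1) * ℓ j ≥ k := by omega
  have h2 : (a + ((∑ j ∈ Finset.univ.filter (fun j : Fin (k + 2) => 1 ≤ (j : ℕ)), min k (ℓ j)) +
      ∑ j : Fin (k + 2), ((j : ℕ) - 1) * min k (ℓ j)) ≥
      k + ∑ j ∈ Finset.univ.filter (fun j : Fin (k + 2) => 1 ≤ (j : ℕ)), min k (ℓ j)) ↔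
      a + ∑ j : Fin (k + 2), ((j : ℕ) - 1) * min k (ℓ j) ≥ k := by omega
  rw [h1, h2]
  exact key k hk a ℓ
end
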